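/- The words xyxy and yxyx can form an identity of M(ab²a, a²b²) only with each other: if M(ab²a, a²b²) satisfies an identity xyxy ≈ v for a word v in variables x, y, then v ∈ {xyxy, yxyx}. -/

import Mathlib

open scoped Classical

def Fac (W : Set (List ℕ)) (u : List ℕ) : Prop := u = [] ∨ ∃ w ∈ W, u <:+: w

lemma Fac.of_infix {W : Set (List ℕ)} {u v : List ℕ} (h : Fac W u) (hv : v <:+: u) :
    Fac W v := by
  rcases h with rfl | ⟨w, hw, hu⟩
  · left; simpa using hv
  · exact Or.inr ⟨w, hw, hv.trans hu⟩

def MWord (W : Set (List ℕ)) : Type := Option {u : List ℕ // Fac W u}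

noncomputable def mwMul {W : Set (List ℕ)} : MWord W → MWord W → MWord W
  | some a, some b =>
      if h : Fac W (a.1 ++ b.1) then some ⟨a.1 ++ b.1, h⟩ else none
  | _, _ => none

lemma mwMul_none_left {W : Set (List ℕ)} (b : MWord W) : mwMul none b = none := by
  cases b <;> rfl

lemma mwMul_none_right {W : Set (List ℕ)} (a : MWord W) : mwMul a none = none := by
  cases a <;> rfl

lemma mwMul_some_some {W : Set (List ℕ)} (a b : {u : List ℕ // Fac W u}) :
    mwMul (some a) (some b) =
      if h : Fac W (a.1 ++ b.1) then some ⟨a.1 ++ b.1, h⟩ else none := rfl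

noncomputable instance MWord.monoid (W : Set (List ℕ)) : Monoid (MWord W) where
  mul := mwMul
  one := some ⟨[], Or.inl rfl⟩
  one_mul a := by
    show mwMul (some ⟨[], Or.inl rfl⟩) a = a
    cases a with
    | none => rfl
    | some a => exact dif_pos a.2
  mul_one a := by
    show mwMul a (some ⟨[], Or.inl rfl⟩) = a
    cases a with
    | none => rfl
    | some a =>
      have h : Fac W (a.1 ++ []) := by simpa using a.2
      rw [mwMul_some_some, dif_pos h]
      exact congrArg some (Subtype.ext (List.append_nil _))
  mul_assoc a b c := by
    show mwMul (mwMul a b) c = mwMul a (mwMul b c)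
    cases a with
    | none => cases b <;> cases c <;> rfl
    | some a =>
      cases b with
      | none => cases c <;> rfl
      | some b =>
        cases c with
        | none => erw [mwMul_none_right, mwMul_none_right]
        | some c =>
          by_cases hab : Fac W (a.1 ++ b.1)
          · by_cases hbc : Fac W (b.1 ++ c.1)
            · rw [mwMul_some_some b c, dif_pos hbc, mwMul_some_some a b, dif_pos hab,
                mwMul_some_some, mwMul_some_some]
              by_cases habc : Fac W (a.1 ++ b.1 ++ c.1)
              · have habc' : Fac W (a.1 ++ (b.1 ++ c.1)) := by
                  rwa [← List.append_assoc]
                rw [dif_pos habc, dif_pos habc']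
                exact congrArg some (Subtype.ext (List.append_assoc _ _ _))
              · have habc' : ¬ Fac W (a.1 ++ (b.1 ++ c.1)) := by
                  rwa [← List.append_assoc]
                rw [dif_neg habc, dif_neg habc']
            · erw [mwMul_some_some b c, dif_neg hbc, mwMul_none_right,
                mwMul_some_some a b, dif_pos hab, mwMul_some_some]
              have : ¬ Fac W (a.1 ++ b.1 ++ c.1) := fun h =>
                hbc (h.of_infix (by rw [List.append_assoc]; exact
                  (List.suffix_append a.1 (b.1 ++ c.1)).isInfix))
              rw [dif_neg this]
          · erw [mwMul_some_some a b, dif_neg hab, mwMul_none_left]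
            cases hc : mwMul (some b) (some c) with
            | none => erw [mwMul_none_right]
            | some bc =>
              rw [mwMul_some_some]
              have hbc : bc.1 = b.1 ++ c.1 := by
                rw [mwMul_some_some] at hc
                by_cases h : Fac W (b.1 ++ c.1)
                · rw [dif_pos h] at hc; cases hc; rfl
                · rw [dif_neg h] at hc; cases hc
              have : ¬ Fac W (a.1 ++ bc.1) := by
                rw [hbc]
                exact fun h => hab (h.of_infix (by
                  rw [← List.append_assoc]
                  exact (List.prefix_append (a.1 ++ b.1) c.1).isInfix))
              rw [dif_neg this]

/-- A monoid `M` satisfies the identity `u ≈ v` if every substitution of elements of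
`M` for the variables makes the two sides equal. -/
def SatM (M : Type*) [Monoid M] (u v : List ℕ) : Prop :=
  ∀ f : ℕ → M, (u.map f).prod = (v.map f).prod

/- Substituting words for the variables, `xyxy ≈ v` transfers to the images in
`M(ab²a, a²b²)`, which are either the zero or a nonzero factor of `ab²a` or `a²b²`, and
nonzero images must coincide as words. The substitutions `x ↦ a, y ↦ 1` and `x ↦ 1, y ↦ b`
send `xyxy` to the nonzero `a²` and `b²`, so `v` has two occurrences of each variable.
The substitutions `x ↦ a, y ↦ b` and `x ↦ b, y ↦ a` send `xyxy` to zero, so neither `v` read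
over `a, b` nor its letter swap is a factor; among the six arrangements of `xxyy` this
leaves `xyxy` and `yxyx`. -/

namespace MWord

variable {W : Set (List ℕ)}

/-- The Rees quotient map; `none` is the zero. -/
noncomputable def ofWord (W : Set (List ℕ)) (u : List ℕ) : MWord W :=
  if h : Fac W u then some ⟨u, h⟩ else none

theorem ofWord_of_fac {u : List ℕ} (h : Fac W u) : ofWord W u = some ⟨u, h⟩ :=
  dif_pos h

theorem ofWord_of_not_fac {u : List ℕ} (h : ¬ Fac W u) : ofWord W u = none :=
  dif_neg h

theorem ofWord_nil : ofWord W [] = 1 :=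
  ofWord_of_fac (Or.inl rfl)

theorem ofWord_append (u w : List ℕ) : ofWord W (u ++ w) = ofWord W u * ofWord W w := by
  by_cases hu : Fac W u
  · by_cases hw : Fac W w
    · rw [ofWord_of_fac hu, ofWord_of_fac hw]
      rfl
    · rw [ofWord_of_not_fac hw,
        ofWord_of_not_fac fun h => hw (h.of_infix (List.suffix_append u w).isInfix)]
      exact (mwMul_none_right _).symm
  · rw [ofWord_of_not_fac hu,
      ofWord_of_not_fac fun h => hu (h.of_infix (List.prefix_append u w).isInfix)]
    exact (mwMul_none_left _).symm

theorem prod_map_ofWord (σ : ℕ → List ℕ) (u : List ℕ) :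
    (u.map fun n => ofWord W (σ n)).prod = ofWord W (u.flatMap σ) := by
  induction u with
  | nil => exact ofWord_nil.symm
  | cons n u ih => rw [List.map_cons, List.prod_cons, ih, List.flatMap_cons, ofWord_append]

theorem eq_of_ofWord_eq {u w : List ℕ} (hu : Fac W u) (h : ofWord W u = ofWord W w) : u = w := by
  by_cases hw : Fac W w
  · rw [ofWord_of_fac hu, ofWord_of_fac hw] at h
    exact congrArg Subtype.val (Option.some_injective _ h)
  · rw [ofWord_of_fac hu, ofWord_of_not_fac hw] at h
    exact absurd h (Option.some_ne_none _)

end MWord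

theorem List.flatMap_ite_eq_replicate_count (k : ℕ) (l : List ℕ) :
    l.flatMap (fun n => if n = k then [k] else []) = List.replicate (l.count k) k := by
  induction l with
  | nil => rfl
  | cons n l ih =>
    by_cases hn : n = k
    · simp [hn, ih, List.replicate_succ]
    · simp [hn, ih]

namespace SatM

open MWord

variable {W : Set (List ℕ)} {u v : List ℕ}

theorem symm {M : Type*} [Monoid M] (h : SatM M u v) : SatM M v u := fun f => (h f).symm

theorem ofWord_flatMap (h : SatM (MWord W) u v) (σ : ℕ → List ℕ) :
    ofWord W (u.flatMap σ) = ofWord W (v.flatMap σ) := by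
  rw [← prod_map_ofWord, ← prod_map_ofWord]
  exact h _

theorem flatMap_eq (h : SatM (MWord W) u v) (σ : ℕ → List ℕ) (hu : Fac W (u.flatMap σ)) :
    u.flatMap σ = v.flatMap σ :=
  eq_of_ofWord_eq hu (h.ofWord_flatMap σ)

theorem not_fac_flatMap (h : SatM (MWord W) u v) (σ : ℕ → List ℕ)
    (hu : ¬ Fac W (u.flatMap σ)) : ¬ Fac W (v.flatMap σ) := fun hv =>
  hu ((h.symm.flatMap_eq σ hv) ▸ hv)

theorem count_eq (h : SatM (MWord W) u v) (k : ℕ)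
    (hk : Fac W (List.replicate (u.count k) k)) : v.count k = u.count k := by
  have := h.flatMap_eq (fun n => if n = k then [k] else [])
  simp only [List.flatMap_ite_eq_replicate_count] at this
  simpa using congrArg List.length (this hk).symm

theorem not_fac_map (h : SatM (MWord W) u v) (f : ℕ → ℕ) (hu : ¬ Fac W (u.map f)) :
    ¬ Fac W (v.map f) := by
  rw [← List.flatMap_pure_eq_map] at hu ⊢
  exact h.not_fac_flatMap _ hu

end SatM

theorem fac_abba_aabb_iff (u : List ℕ) :
    Fac {[0, 1, 1, 0], [0, 0, 1, 1]} u ↔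
      u = [] ∨ u <:+: [0, 1, 1, 0] ∨ u <:+: [0, 0, 1, 1] := by
  simp [Fac]

theorem perm_xxyy_of_count (v : List ℕ) (hv : ∀ a ∈ v, a = 0 ∨ a = 1) (h0 : v.count 0 = 2)
    (h1 : v.count 1 = 2) : v.Perm [0, 0, 1, 1] := by
  refine List.perm_iff_count.2 fun a => ?_
  by_cases ha : a = 0 ∨ a = 1
  · rcases ha with rfl | rfl <;> assumption
  · rw [List.count_eq_zero.2 fun hmem => ha (hv a hmem),
      List.count_eq_zero.2 (by simpa using ha)]

theorem eq_xyxy_or_yxyx_of_perm {v : List ℕ} (hperm : v.Perm [0, 0, 1, 1])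
    (hv : ¬ Fac {[0, 1, 1, 0], [0, 0, 1, 1]} v)
    (hswap : ¬ Fac {[0, 1, 1, 0], [0, 0, 1, 1]} (v.map (1 - ·))) :
    v = [0, 1, 0, 1] ∨ v = [1, 0, 1, 0] := by
  have key : ∀ w ∈ [0, 0, 1, 1].permutations',
      ¬ (w = [] ∨ w <:+: [0, 1, 1, 0] ∨ w <:+: [0, 0, 1, 1]) →
      ¬ (w.map (1 - ·) = [] ∨ w.map (1 - ·) <:+: [0, 1, 1, 0] ∨
        w.map (1 - ·) <:+: [0, 0, 1, 1]) →
      w = [0, 1, 0, 1] ∨ w = [1, 0, 1, 0] := by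
    decide
  rw [fac_abba_aabb_iff] at hv hswap
  exact key v (List.mem_permutations'.2 hperm) hv hswap

/-- Variables `x = 0`, `y = 1`; letters `a = 0`, `b = 1`. -/
theorem xyxy_yxyx (v : List ℕ) (hv : ∀ a ∈ v, a = 0 ∨ a = 1)
    (hsat : SatM (MWord ({[0, 1, 1, 0], [0, 0, 1, 1]} : Set (List ℕ))) [0, 1, 0, 1] v) :
    v = [0, 1, 0, 1] ∨ v = [1, 0, 1, 0] := by
  have h0 : v.count 0 = 2 := hsat.count_eq 0 ((fac_abba_aabb_iff _).2 (by decide))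
  have h1 : v.count 1 = 2 := hsat.count_eq 1 ((fac_abba_aabb_iff _).2 (by decide))
  have hfac : ¬ Fac {[0, 1, 1, 0], [0, 0, 1, 1]} v := by
    simpa using hsat.not_fac_map id (by rw [fac_abba_aabb_iff]; decide)
  have hswap := hsat.not_fac_map (1 - ·) (by rw [fac_abba_aabb_iff]; decide)
  exact eq_xyxy_or_yxyx_of_perm (perm_xxyy_of_count v hv h0 h1) hfac hswap
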